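/- arXiv:2203.14261 — 4 statements merged into one kernel-verified Lean document; each statement's English description precedes it below -/
import Mathlib

section
/- Let L be a complete lattice, F : L → L ω-continuous, and α ∈ L. There exists a KTω witness for (L, F, α) if and only if there exists a conclusive KT sequence, i.e., a finite chain X₀ ≤ ⋯ ≤ X_{n−1} (n ≥ 2) with X_{n−2} ≤ α, F(Xᵢ) ≤ X_{i+1} for 0 ≤ i ≤ n−2, and X_{j+1} ≤ X_j for some j. -/
def OmegaContinuous {L : Type*} [CompleteLattice L] (F : L → L) : Prop :=
  ∀ c : ℕ → L, Monotone c → F (⨆ n, c n) = ⨆ n, F (c n)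

/-- A KTω witness exists iff a conclusive KT sequence exists. -/
theorem stmt6 {L : Type*} [CompleteLattice L] (F : L → L)
    (hF : OmegaContinuous F) (α : L) :
    (∃ X : ℕ → L, Monotone X ∧ (∀ i, F (X i) ≤ X (i + 1)) ∧ (∀ i, X i ≤ α)) ↔
      ∃ (n : ℕ) (X : ℕ → L), 2 ≤ n ∧
        (∀ i, i + 1 < n → X i ≤ X (i + 1)) ∧
        X (n - 2) ≤ α ∧
        (∀ i, i + 1 < n → F (X i) ≤ X (i + 1)) ∧
        (∃ j, j + 1 < n ∧ X (j + 1) ≤ X j) := by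
  constructor
  · rintro ⟨X, hmono, hstep, hα⟩
    set Y := ⨆ n, X n with hY
    have hFY : F Y ≤ Y := by
      rw [hY, hF X hmono]
      exact iSup_le fun n => le_trans (hstep n) (le_iSup X (n + 1))
    have hYα : Y ≤ α := iSup_le hα
    exact ⟨2, fun _ => Y, le_refl 2, fun i _ => le_refl Y, hYα,
      fun i _ => hFY, 0, by norm_num, le_refl Y⟩
  · rintro ⟨n, X, hn, hchain, hα, hstep, j, hj, hconc⟩
    have hle : ∀ a b, a ≤ b → b < n → X a ≤ X b := by
      intro a b hab hbn
      induction b with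
      | zero => simp_all
      | succ b ih =>
        rcases Nat.lt_or_ge a (b + 1) with h | h
        · exact le_trans (ih (Nat.lt_succ_iff.mp h) (Nat.lt_of_succ_lt hbn))
            (hchain b hbn)
        · have : a = b + 1 := le_antisymm hab h
          simp [this]
    have hjα : X j ≤ α := by
      have h1 : X j ≤ X (n - 2) := by
        apply hle
        · omega
        · omega
      exact le_trans h1 hα
    have hFj : F (X j) ≤ X j := le_trans (hstep j hj) hconc
    exact ⟨fun _ => X j, monotone_const, fun i => hFj, fun i => hjα⟩
end

section
/- Let L be a complete lattice, F : L → L ω-continuous, (Cᵢ, …, C_{n−1}) a partial Kleene sequence (0 < i ≤ n−1, Cⱼ ≤ F C_{j−1} for i < j ≤ n−1, C_{n−1} ≰ α). Then C can be extended to a conclusive Kleene sequence (C₀, …, C_{n−1}) with C₀ = ⊥ if and only if Cᵢ ≤ Fⁱ(⊥). -/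
lemma omegaCont_mono {L : Type*} [CompleteLattice L] {F : L → L}
    (hF : OmegaContinuous F) : Monotone F := by
  intro a b hab
  set c : ℕ → L := fun n => if n = 0 then a else b with hc
  have hmono : Monotone c := by
    intro m k hmk
    by_cases hm : m = 0
    · by_cases hk : k = 0 <;> simp [hc, hm, hk, hab]
    · have hk : k ≠ 0 := by omega
      simp [hc, hm, hk]
  have hsup : (⨆ n, c n) = b := by
    apply le_antisymm
    · exact iSup_le fun n => by by_cases h : n = 0 <;> simp [hc, h, hab]
    · simpa [hc] using le_iSup c 1
  have := hF c hmono
  rw [hsup] at this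
  rw [this]
  simpa [hc] using le_iSup (fun n => F (c n)) 0

/-- A partial Kleene sequence `(C i, …, C (n-1))` can be extended to a conclusive
Kleene sequence iff `C i ≤ F^[i] ⊥`. -/
theorem stmt11 {L : Type*} [CompleteLattice L] (F : L → L)
    (hF : OmegaContinuous F) (α : L) (n i : ℕ)
    (hi0 : 0 < i) (hin : i < n) (C : ℕ → L)
    (hstep : ∀ j, i < j → j < n → C j ≤ F (C (j - 1)))
    (hlast : ¬ C (n - 1) ≤ α) :
    (∃ C' : ℕ → L, C' 0 = ⊥ ∧
        (∀ j, 1 ≤ j → j < n → C' j ≤ F (C' (j - 1))) ∧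
        ¬ C' (n - 1) ≤ α ∧
        (∀ j, i ≤ j → j < n → C' j = C j)) ↔
      C i ≤ F^[i] ⊥ := by
  have hmonoF := omegaCont_mono hF
  constructor
  · rintro ⟨C', h0, hstep', -, hagree⟩
    have key : ∀ j, j < n → C' j ≤ F^[j] ⊥ := by
      intro j
      induction j with
      | zero => intro _; simp [h0]
      | succ k ih =>
        intro hk
        have hk' : k < n := by omega
        calc C' (k + 1) ≤ F (C' k) := by
              simpa using hstep' (k + 1) (by omega) hk
          _ ≤ F (F^[k] ⊥) := hmonoF (ih hk')
          _ = F^[k + 1] ⊥ := (Function.iterate_succ_apply' F k ⊥).symm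
    have := key i (by omega)
    rwa [hagree i le_rfl (by omega)] at this
  · intro hCi
    refine ⟨fun j => if j < i then F^[j] ⊥ else C j, by simp [hi0], ?_, ?_, ?_⟩
    · intro j hj1 hjn
      rcases lt_trichotomy j i with h | h | h
      · have hj1' : j - 1 < i := by omega
        simp only [if_pos h, if_pos hj1']
        have heq : F^[j] ⊥ = F (F^[j - 1] ⊥) := by
          conv_lhs => rw [show j = (j - 1) + 1 by omega]
          rw [Function.iterate_succ_apply' F (j - 1) ⊥]
        exact le_of_eq heq
      · subst h
        have hj1' : j - 1 < j := by omega
        simp only [if_neg (lt_irrefl j), if_pos hj1']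
        calc C j ≤ F^[j] ⊥ := hCi
          _ = F (F^[j - 1] ⊥) := by
            conv_lhs => rw [show j = (j - 1) + 1 by omega]
            rw [Function.iterate_succ_apply' F (j - 1) ⊥]
      · have h1 : ¬ j < i := by omega
        have h2 : ¬ j - 1 < i := by omega
        simp only [if_neg h1, if_neg h2]
        exact hstep j h hjn
    · have : ¬ n - 1 < i := by omega
      simpa [this] using hlast
    · intro j hj _
      simp [Nat.not_lt.mpr hj]
end

section
/- Let L be a complete lattice, F : L → L ω-continuous, and α ∈ L. If there exists a KT sequence of length n (i.e., X₀ ≤ ⋯ ≤ X_{n−1} with X_{n−2} ≤ α and F(Xᵢ) ≤ X_{i+1}), then there is no conclusive Kleene sequence of length n−1. -/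
/-- If there is a KT sequence of length `n`, then there is no conclusive Kleene
sequence of length `n - 1`. -/
theorem stmt15 {L : Type*} [CompleteLattice L] (F : L → L)
    (hF : OmegaContinuous F) (α : L) (n : ℕ) (X : ℕ → L)
    (hn : 2 ≤ n)
    (hchain : ∀ k, k + 1 < n → X k ≤ X (k + 1))
    (hXα : X (n - 2) ≤ α)
    (hXpre : ∀ k, k + 1 < n → F (X k) ≤ X (k + 1)) :
    ¬ ∃ C : ℕ → L, C 0 = ⊥ ∧
        (∀ j, 1 ≤ j → j < n - 1 → C j ≤ F (C (j - 1))) ∧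
        ¬ C (n - 2) ≤ α := by
  -- F is monotone
  have hmono : Monotone F := by
    intro a b hab
    set c : ℕ → L := fun k => if k = 0 then a else b with hc
    have hcm : Monotone c := by
      intro i j hij
      by_cases hi : i = 0 <;> by_cases hj : j = 0 <;> simp [hc, hi, hj, hab]
      omega
    have hsup : (⨆ k, c k) = b := by
      apply le_antisymm
      · exact iSup_le fun k => by by_cases hk : k = 0 <;> simp [hc, hk, hab]
      · exact le_iSup_of_le 1 (by simp [hc])
    have := hF c hcm
    rw [hsup] at this
    rw [this]
    exact le_iSup_of_le 0 (by simp [hc])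
  rintro ⟨C, hC0, hCstep, hCα⟩
  apply hCα
  have key : ∀ j, j < n - 1 → C j ≤ X j := by
    intro j
    induction j with
    | zero => intro _; simp [hC0]
    | succ j ih =>
      intro hj
      calc C (j + 1) ≤ F (C j) := by
              simpa using hCstep (j + 1) (by omega) hj
        _ ≤ F (X j) := hmono (ih (by omega))
        _ ≤ X (j + 1) := hXpre j (by omega)
  exact le_trans (key (n - 2) (by omega)) hXα
end

section
/- Let S be a set, ι, α ⊆ S, δ : S → 𝒫(S), and define F'' : 𝒫(S) → 𝒫(S) by F''(A) = ι ∪ ⋃_{s∈A} δ(s), and F' : 𝒫(S) → 𝒫(S) by F'(A) = {s | ∀s'. s' ∈ δ(s) → s' ∈ A}. Then ι ⊆ ν(λx. α ∩ F'(x)) if and only if μF'' ⊆ α. -/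
/-- Equivalence of the backward safety problem and the forward safety problem
for Kripke structures. -/
theorem stmt18 {S : Type*} (ι α : Set S) (δ : S → Set S) :
    ι ⊆ sSup {x : Set S | x ⊆ α ∩ {s | ∀ s', s' ∈ δ s → s' ∈ x}} ↔
      sInf {x : Set S | ι ∪ ⋃ s ∈ x, δ s ⊆ x} ⊆ α := by
  rw [Set.sSup_eq_sUnion, Set.sInf_eq_sInter]
  set T : Set (Set S) := {x : Set S | x ⊆ α ∩ {s | ∀ s', s' ∈ δ s → s' ∈ x}} with hT
  set ν : Set S := ⋃₀ T with hν
  -- ν is a postfixed point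
  have hνα : ν ⊆ α := by
    intro s hs
    rcases Set.mem_sUnion.mp hs with ⟨x, hx, hsx⟩
    exact (hx hsx).1
  have hνstep : ∀ s ∈ ν, ∀ s' ∈ δ s, s' ∈ ν := by
    intro s hs s' hs'
    rcases Set.mem_sUnion.mp hs with ⟨x, hx, hsx⟩
    exact Set.mem_sUnion.mpr ⟨x, hx, (hx hsx).2 s' hs'⟩
  constructor
  · intro h
    have hmem : ν ∈ {x : Set S | ι ∪ ⋃ s ∈ x, δ s ⊆ x} := by
      intro s hs
      rcases hs with hs | hs
      · exact h hs
      · rcases Set.mem_iUnion₂.mp hs with ⟨t, ht, hst⟩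
        exact hνstep t ht s hst
    exact (Set.sInter_subset_of_mem hmem).trans hνα
  · intro h
    set μ : Set S := ⋂₀ {x : Set S | ι ∪ ⋃ s ∈ x, δ s ⊆ x} with hμ
    -- μ is a prefixed point
    have hμpre : ι ∪ ⋃ s ∈ μ, δ s ⊆ μ := by
      intro s hs
      refine Set.mem_sInter.mpr fun x hx => hx ?_
      rcases hs with hs | hs
      · exact Or.inl hs
      · rcases Set.mem_iUnion₂.mp hs with ⟨t, ht, hst⟩
        exact Or.inr (Set.mem_iUnion₂.mpr ⟨t, Set.mem_sInter.mp ht x hx, hst⟩)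
    have hμT : μ ∈ T := by
      intro s hs
      refine ⟨h hs, fun s' hs' => ?_⟩
      exact hμpre (Or.inr (Set.mem_iUnion₂.mpr ⟨s, hs, hs'⟩))
    exact fun s hs => Set.mem_sUnion.mpr ⟨μ, hμT, hμpre (Or.inl hs)⟩
end
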